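/- arXiv:1509.04372 — 4 statements merged into one kernel-verified Lean document; each statement's English description precedes it below -/
import Mathlib

section
/- For every finite alphabet Σ with |Σ| = q ≥ 1 and all positive integers n and M, the number of instances of the n-th Zimin word Z_n among words in Σ^{M+1} is at least q times the number of instances of Z_n among words in Σ^M, i.e., |Inst_{M+1}(Z_n,Σ)| ≥ q·|Inst_M(Z_n,Σ)|. -/
open Filter

/-- `U` is an instance of `V`: image of `V` under a nonerasing substitution. -/
def IsInstance {Γ β : Type*} (V : List Γ) (U : List β) : Prop :=
  ∃ φ : Γ → List β, (∀ x ∈ V, φ x ≠ []) ∧ U = (V.map φ).flatten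

/-- `W` encounters `V`: some factor of `W` is an instance of `V`. -/
def Encounters {Γ β : Type*} (V : List Γ) (W : List β) : Prop :=
  ∃ U : List β, U <:+: W ∧ IsInstance V U

/-- Zimin words over alphabet ℕ. -/
def Zimin : ℕ → List ℕ
  | 0 => []
  | n + 1 => Zimin n ++ [n] ++ Zimin n

/-- Least M such that every q-ary word of length M encounters Z_n. -/
noncomputable def fZ (n q : ℕ) : ℕ :=
  sInf {M | ∀ W : List (Fin q), W.length = M → Encounters (Zimin n) W}

/-- Exponential tower with b copies of a. -/
def tower (a : ℕ) : ℕ → ℕ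
  | 0 => 1
  | b + 1 => a ^ tower a b

/-- Number of length-M q-ary words that are instances of V. -/
noncomputable def instCount (V : List ℕ) (q M : ℕ) : ℕ :=
  Nat.card {W : Fin M → Fin q // IsInstance V (List.ofFn W)}

/-- Factor density d(V,W). -/
noncomputable def factorDensity {α : Type*} [DecidableEq α] (V W : List α) : ℝ :=
  (((((Finset.range (W.length + 1)) ×ˢ (Finset.range (W.length + 1))).filter
      (fun p => p.1 < p.2 ∧ (W.drop p.1).take (p.2 - p.1) = V)).card : ℝ)) /
    ((W.length : ℝ) + 1 - (V.length : ℝ))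

/-- Number of substrings of W (given by position pairs) that are V-instances. -/
noncomputable def instSubCount {Γ β : Type*} (V : List Γ) (W : List β) : ℕ :=
  Nat.card {p : ℕ × ℕ //
    p.1 < p.2 ∧ p.2 ≤ W.length ∧ IsInstance V ((W.drop p.1).take (p.2 - p.1))}

/-- Instance density δ(V,W). -/
noncomputable def instDensity {Γ β : Type*} (V : List Γ) (W : List β) : ℝ :=
  (instSubCount V W : ℝ) / ((W.length + 1).choose 2 : ℝ)

/-- q-liminf density of V. -/
noncomputable def liminfDensity {Γ : Type*} (V : List Γ) (q : ℕ) : ℝ :=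
  Filter.liminf (fun W : List (Fin q) => instDensity V W) (Filter.comap List.length Filter.atTop)

/-- Expected instance density of V in a uniformly random q-ary word of length n. -/
noncomputable def expDensity {Γ : Type*} (V : List Γ) (q n : ℕ) : ℝ :=
  (∑ W : Fin n → Fin q, instDensity V (List.ofFn W)) / (q : ℝ) ^ n

/-- Variance of the instance density of V in a uniformly random q-ary word of length n. -/
noncomputable def varDensity {Γ : Type*} (V : List Γ) (q n : ℕ) : ℝ :=
  (∑ W : Fin n → Fin q, (instDensity V (List.ofFn W) - expDensity V q n) ^ 2) / (q : ℝ) ^ n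

/-- Probability that a uniformly random q-ary word of length n is a V-instance. -/
noncomputable def instProb {Γ : Type*} (V : List Γ) (q n : ℕ) : ℝ :=
  (Nat.card {W : Fin n → Fin q // IsInstance V (List.ofFn W)} : ℝ) / (q : ℝ) ^ n

/-- V is doubled: every letter occurring in V occurs at least twice. -/
def Doubled {Γ : Type*} [DecidableEq Γ] (V : List Γ) : Prop :=
  ∀ x ∈ V, 2 ≤ V.count x

/-- Number of letter recurrences ‖V‖ = |V| - |L(V)|. -/
def recurCount {Γ : Type*} [DecidableEq Γ] (V : List Γ) : ℕ :=
  V.length - V.dedup.length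

/-!
An instance of `Z_{m+1} = Z_m x Z_m` is a word `P B P` with `P` an instance of `Z_m` and `B`
nonempty. Inserting a letter `a` just before the second copy of the *shortest* such border `P`
yields the instance `P (B a) P`, one letter longer. This is injective in `(a, W)`: if two
stretched words coincide, the shorter of the two borders is a prefix and a suffix of the longer
one, hence also a border of the other original word; by minimality both borders have the same
length, and then `a` and `W` can be read off.
-/

namespace List

variable {β : Type*}

lemma isPrefix_and_isSuffix_of_append_append_eq {P P' X X' : List β}
    (h : P ++ X ++ P = P' ++ X' ++ P') (hle : P.length ≤ P'.length) : P <+: P' ∧ P <:+ P' := by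
  constructor
  · refine prefix_of_prefix_length_le (l₃ := P' ++ X' ++ P') ?_ ⟨X' ++ P', by simp⟩ hle
    exact h ▸ ⟨X ++ P, by simp⟩
  · exact suffix_of_suffix_length_le (h ▸ suffix_append _ _) (suffix_append _ _) hle

end List

open List

section Sandwich

variable {β : Type*} (S : Set (List β))

def HasSandwichBorder (W : List β) (k : ℕ) : Prop :=
  ∃ P B, P ∈ S ∧ P.length = k ∧ B ≠ [] ∧ W = P ++ B ++ P

noncomputable def shortestBorder (W : List β) : ℕ :=
  sInf {k | HasSandwichBorder S W k}

noncomputable def stretch (a : β) (W : List β) : List β :=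
  W.take (W.length - shortestBorder S W) ++ a :: W.drop (W.length - shortestBorder S W)

variable {S}

lemma length_stretch (a : β) (W : List β) : (stretch S a W).length = W.length + 1 := by
  simp only [stretch, length_append, length_take, length_cons, length_drop]
  omega

lemma exists_shortestBorder_eq {W : List β} (hW : ∃ k, HasSandwichBorder S W k) :
    ∃ P B, P ∈ S ∧ P.length = shortestBorder S W ∧ B ≠ [] ∧ W = P ++ B ++ P :=
  Nat.sInf_mem hW

lemma stretch_of_eq {W P B : List β} (a : β) (hP : P.length = shortestBorder S W)
    (hW : W = P ++ B ++ P) : stretch S a W = P ++ (B ++ [a]) ++ P := by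
  have hi : W.length - shortestBorder S W = (P ++ B).length := by
    rw [← hP, hW, length_append]; omega
  rw [stretch, hi, hW, take_left' rfl, drop_left' rfl]
  simp

lemma shortestBorder_le_of_append_append_eq {P P' X X' B' : List β} (hP : P ∈ S) (hB' : B' ≠ [])
    (h : P ++ X ++ P = P' ++ X' ++ P') (hle : P.length ≤ P'.length) :
    shortestBorder S (P' ++ B' ++ P') ≤ P.length := by
  obtain ⟨⟨D, rfl⟩, ⟨E, hE⟩⟩ := isPrefix_and_isSuffix_of_append_append_eq h hle
  refine Nat.sInf_le ⟨P, D ++ B' ++ E, hP, rfl, by simp [hB'], ?_⟩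
  nth_rewrite 2 [← hE]
  simp

lemma hasSandwichBorder_stretch {W : List β} (a : β) (hW : ∃ k, HasSandwichBorder S W k) :
    ∃ k, HasSandwichBorder S (stretch S a W) k := by
  obtain ⟨P, B, hP, hPk, -, hWPB⟩ := exists_shortestBorder_eq hW
  exact ⟨P.length, P, B ++ [a], hP, rfl, by simp, stretch_of_eq a hPk hWPB⟩

lemma stretch_injective {a a' : β} {W W' : List β} (hW : ∃ k, HasSandwichBorder S W k)
    (hW' : ∃ k, HasSandwichBorder S W' k) (h : stretch S a W = stretch S a' W') :
    a = a' ∧ W = W' := by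
  obtain ⟨P, B, hP, hPk, hB, rfl⟩ := exists_shortestBorder_eq hW
  obtain ⟨P', B', hP', hPk', hB', rfl⟩ := exists_shortestBorder_eq hW'
  rw [stretch_of_eq a hPk rfl, stretch_of_eq a' hPk' rfl] at h
  have hlen : P.length = P'.length := by
    rcases le_total P.length P'.length with hle | hle
    · exact hle.antisymm (hPk' ▸ shortestBorder_le_of_append_append_eq hP hB' h hle)
    · exact (hPk ▸ shortestBorder_le_of_append_append_eq hP' hB h.symm hle).antisymm hle
  obtain ⟨rfl, h⟩ := append_inj (by simpa only [append_assoc] using h) hlen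
  obtain ⟨rfl, rfl⟩ := append_singleton_inj.1 (append_cancel_right (bs := P) (by simpa using h))
  exact ⟨rfl, rfl⟩

end Sandwich

lemma lt_of_mem_zimin {x n : ℕ} (h : x ∈ Zimin n) : x < n := by
  induction n with
  | zero => simp [Zimin] at h
  | succ n ih =>
    simp only [Zimin, mem_append, mem_singleton] at h
    rcases h with (h | rfl) | h <;> grind

lemma isInstance_append_singleton_append_iff {Γ β : Type*} [DecidableEq Γ] {V : List Γ} {x : Γ}
    (hx : x ∉ V) {U : List β} :
    IsInstance (V ++ [x] ++ V) U ↔ ∃ k, HasSandwichBorder {P | IsInstance V P} U k := by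
  constructor
  · rintro ⟨φ, hφ, rfl⟩
    exact ⟨_, _, φ x, ⟨φ, fun y hy => hφ y (by simp [hy]), rfl⟩, rfl, hφ x (by simp),
      by simp⟩
  · rintro ⟨-, P, B, ⟨ψ, hψ, rfl⟩, -, hB, rfl⟩
    have hV : V.map (Function.update ψ x B) = V.map ψ :=
      map_congr_left fun y hy => Function.update_of_ne (ne_of_mem_of_not_mem hy hx) _ _
    refine ⟨Function.update ψ x B, fun y hy => ?_, by simp [hV]⟩
    rcases eq_or_ne y x with rfl | hyx
    · simpa using hB
    · rw [Function.update_of_ne hyx]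
      exact hψ y (by simpa [hyx] using hy)

lemma isInstance_zimin_succ_iff {β : Type*} {m : ℕ} {U : List β} :
    IsInstance (Zimin (m + 1)) U ↔ ∃ k, HasSandwichBorder {P | IsInstance (Zimin m) P} U k :=
  isInstance_append_singleton_append_iff fun h => (lt_of_mem_zimin h).false

lemma card_subtype_ofFn {α : Type*} (p : List α → Prop) (M : ℕ) :
    Nat.card {W : Fin M → α // p (ofFn W)} = Nat.card {v : List.Vector α M // p v.toList} :=
  Nat.card_congr <| (Equiv.vectorEquivFin α M).symm.subtypeEquiv fun W => by
    simp [Equiv.vectorEquivFin, List.Vector.toList_ofFn]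

theorem card_mul_card_sandwich_le_card_succ {α : Type*} [Finite α] (S : Set (List α)) (M : ℕ) :
    Nat.card α * Nat.card {W : Fin M → α // ∃ k, HasSandwichBorder S (ofFn W) k} ≤
      Nat.card {W : Fin (M + 1) → α // ∃ k, HasSandwichBorder S (ofFn W) k} := by
  simp only [card_subtype_ofFn (fun W => ∃ k, HasSandwichBorder S W k), ← Nat.card_prod]
  refine Nat.card_le_card_of_injective
    (fun p => ⟨⟨stretch S p.1 p.2.1.toList, by simp [length_stretch]⟩,
      hasSandwichBorder_stretch p.1 p.2.2⟩) ?_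
  rintro ⟨a, v, hv⟩ ⟨a', v', hv'⟩ h
  obtain ⟨rfl, hvv⟩ := stretch_injective hv hv' (congrArg (fun w => w.1.toList) h)
  obtain rfl := List.Vector.eq _ _ hvv
  rfl

theorem stmt1_general (q n M : ℕ) (hn : 1 ≤ n) :
    q * instCount (Zimin n) q M ≤ instCount (Zimin n) q (M + 1) := by
  obtain ⟨m, rfl⟩ := Nat.exists_eq_add_of_le' hn
  simp only [instCount, isInstance_zimin_succ_iff]
  simpa using card_mul_card_sandwich_le_card_succ (α := Fin q) {P | IsInstance (Zimin m) P} M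

theorem stmt1 (q n M : ℕ) (hq : 1 ≤ q) (hn : 1 ≤ n) (hM : 1 ≤ M) :
    q * instCount (Zimin n) q M ≤ instCount (Zimin n) q (M + 1) :=
  stmt1_general q n M hn
end

section
/- Let 0 < k < ℓ be integers and let (d_k, d_ℓ) be a pair of rational numbers satisfying 0 ≤ d_ℓ ≤ d_k and k(d_ℓ − 1) ≥ ℓ(d_k − 1). Then for every ε > 0 and every N there exists a word W over a two-letter alphabet {a,b} with |W| ≥ N such that |d(a^k, W) − d_k| < ε and |d(a^ℓ, W) − d_ℓ| < ε. -/
open Filter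

/-!
In a word `a^r₁ b a^r₂ b ⋯ a^rₘ b` the occurrences of `a^j` are counted run by run: a run of
length `r` contains `r + 1 - j` of them (truncated subtraction). Take one long run of length
about `d_ℓ L`, about `(d_k - d_ℓ) L / (ℓ - k)` runs of length `ℓ - 1` (each holding `ℓ - k`
copies of `a^k` and none of `a^ℓ`), and pad with single `b`s up to length `L`. The padding is
nonnegative precisely when `ℓ (d_k - 1) ≤ k (d_ℓ - 1)`, and letting `L → ∞` along multiples of a
common denominator of `d_k, d_ℓ` makes both densities converge to their targets.
-/

open Topology

theorem replicate_prefix_replicate_append_cons_iff {α : Type*} {a b : α} (hab : a ≠ b)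
    (k m : ℕ) (Y : List α) :
    List.replicate k a <+: List.replicate m a ++ b :: Y ↔ k ≤ m := by
  constructor
  · intro h
    by_contra! hmk
    have := h.getElem (i := m) (by simpa using hmk)
    simp [List.getElem_append_right] at this
    exact hab this
  · intro h
    refine ⟨List.replicate (m - k) a ++ b :: Y, ?_⟩
    rw [← List.append_assoc, ← List.replicate_add, Nat.add_sub_cancel' h]

def runsWord {α : Type*} (a b : α) (rs : List ℕ) : List α :=
  (rs.map fun r => List.replicate r a ++ [b]).flatten

theorem length_runsWord {α : Type*} (a b : α) (rs : List ℕ) :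
    (runsWord a b rs).length = (rs.map (· + 1)).sum := by
  simp [runsWord, List.length_flatten, Function.comp_def]

section FactorCount

variable {α : Type*} [DecidableEq α]

def factorCount (V W : List α) : ℕ :=
  ((Finset.range (W.length + 1)).filter fun i => V <+: W.drop i).card

theorem factorDensity_eq_factorCount_div {V : List α} (hV : V ≠ []) (W : List α) :
    factorDensity V W = factorCount V W / ((W.length : ℝ) + 1 - V.length) := by
  rw [factorDensity, factorCount]
  congr 2
  apply Finset.card_nbij' Prod.fst (fun i => (i, i + V.length))
  · rintro ⟨i, j⟩ h
    simp only [Finset.mem_coe, Finset.mem_filter, Finset.mem_product, Finset.mem_range] at h ⊢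
    obtain ⟨⟨hi, -⟩, -, rfl⟩ := h
    exact ⟨hi, List.take_prefix _ _⟩
  · intro i h
    simp only [Finset.mem_coe, Finset.mem_filter, Finset.mem_product, Finset.mem_range] at h ⊢
    obtain ⟨hi, hpre⟩ := h
    have hlen := hpre.length_le
    have hV' := List.length_pos_iff.mpr hV
    simp only [List.length_drop] at hlen
    refine ⟨⟨hi, by omega⟩, by omega, ?_⟩
    simpa using (List.prefix_iff_eq_take.mp hpre).symm
  · rintro ⟨i, j⟩ h
    simp only [Finset.mem_coe, Finset.mem_filter, Finset.mem_product, Finset.mem_range] at h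
    obtain ⟨⟨-, hj⟩, hij, rfl⟩ := h
    simp only [Prod.mk.injEq, true_and, List.length_take, List.length_drop]
    omega
  · intro i _
    rfl

theorem factorCount_nil {V : List α} (hV : V ≠ []) : factorCount V [] = 0 := by
  simp [factorCount, List.prefix_nil, hV]

theorem factorCount_cons (V W : List α) (x : α) :
    factorCount V (x :: W) = factorCount V W + if V <+: x :: W then 1 else 0 := by
  simp only [factorCount, Finset.card_filter, List.length_cons,
    Finset.sum_range_succ' _ (W.length + 1), List.drop_succ_cons, List.drop_zero]

theorem factorCount_replicate_append_cons {a b : α} (hab : a ≠ b) {k : ℕ} (hk : 0 < k)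
    (r : ℕ) (Y : List α) :
    factorCount (List.replicate k a) (List.replicate r a ++ b :: Y) =
      factorCount (List.replicate k a) Y + (r + 1 - k) := by
  induction r with
  | zero =>
    have h := replicate_prefix_replicate_append_cons_iff hab k 0 Y
    simp only [List.replicate_zero, List.nil_append] at h ⊢
    rw [factorCount_cons, if_neg (by rw [h]; omega)]
    omega
  | succ r ih =>
    rw [List.replicate_succ, List.cons_append, factorCount_cons, ih, ← List.cons_append,
      ← List.replicate_succ]
    simp only [replicate_prefix_replicate_append_cons_iff hab]
    split_ifs <;> omega

theorem factorCount_replicate_runsWord {a b : α} (hab : a ≠ b) {k : ℕ} (hk : 0 < k)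
    (rs : List ℕ) :
    factorCount (List.replicate k a) (runsWord a b rs) = (rs.map (· + 1 - k)).sum := by
  induction rs with
  | nil => exact factorCount_nil (by simpa using hk.ne')
  | cons r rs ih =>
    rw [runsWord, List.map_cons, List.flatten_cons, List.append_assoc, List.singleton_append,
      factorCount_replicate_append_cons hab hk, ← runsWord, ih, List.map_cons, List.sum_cons,
      add_comm]

end FactorCount

/-- The first run gets an extra `ℓ` so that its counts of `a^j`, `j ≤ ℓ`, involve no truncated
subtraction; the trailing empty runs are single `b`s padding the word. -/
def witnessRuns (ℓ P T L n : ℕ) : List ℕ :=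
  (n * P + ℓ) :: (List.replicate (n * T) (ℓ - 1) ++ List.replicate (n * (L - (P + T * ℓ))) 0)

theorem sum_witnessRuns_succ {ℓ P T L : ℕ} (hℓ : 0 < ℓ) (h : P + T * ℓ ≤ L) (n : ℕ) :
    ((witnessRuns ℓ P T L n).map (· + 1)).sum = n * L + (ℓ + 1) := by
  obtain ⟨c, rfl⟩ := Nat.exists_eq_add_of_le h
  simp only [witnessRuns, List.map_cons, List.map_append, List.map_replicate, List.sum_cons,
    List.sum_append, List.sum_replicate, Nat.add_sub_cancel_left, Nat.sub_add_cancel hℓ,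
    smul_eq_mul]
  ring

theorem sum_witnessRuns_sub {ℓ P T L j : ℕ} (hj : 0 < j) (hjℓ : j ≤ ℓ) (n : ℕ) :
    ((witnessRuns ℓ P T L n).map (· + 1 - j)).sum = n * (P + T * (ℓ - j)) + (ℓ + 1 - j) := by
  have hrun : ℓ - 1 + 1 - j = ℓ - j := by omega
  simp only [witnessRuns, List.map_cons, List.map_append, List.map_replicate, List.sum_cons,
    List.sum_append, List.sum_replicate, hrun, smul_eq_mul, Nat.sub_eq_zero_of_le hj, mul_zero,
    add_zero]
  rw [mul_add, ← mul_assoc]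
  omega

theorem tendsto_factorDensity_runsWord_witnessRuns {α : Type*} [DecidableEq α] {a b : α}
    (hab : a ≠ b) {ℓ P T L j : ℕ} (hj : 0 < j) (hjℓ : j ≤ ℓ) (h : P + T * ℓ ≤ L) (hL : 0 < L) :
    Tendsto (fun n => factorDensity (List.replicate j a) (runsWord a b (witnessRuns ℓ P T L n)))
      atTop (𝓝 (((P + T * (ℓ - j) : ℕ) : ℝ) / L)) := by
  refine (tendsto_add_mul_div_add_mul_atTop_nhds ((ℓ + 1 - j : ℕ) : ℝ) ((ℓ : ℝ) + 2 - j) _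
    (Nat.cast_ne_zero.mpr hL.ne')).congr fun n => ?_
  rw [factorDensity_eq_factorCount_div (by simpa using hj.ne'),
    factorCount_replicate_runsWord hab hj, length_runsWord, sum_witnessRuns_sub hj hjℓ,
    sum_witnessRuns_succ (hj.trans_le hjℓ) h, List.length_replicate]
  push_cast
  ring

theorem Rat.exists_eq_natCast_div_natCast_of_nonneg {x y : ℚ} (hx : 0 ≤ x) (hy : 0 ≤ y) :
    ∃ p q D : ℕ, 0 < D ∧ x = p / D ∧ y = q / D := by
  have hnum {z : ℚ} (hz : 0 ≤ z) : ((z.num.toNat : ℕ) : ℚ) = z.num := by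
    exact_mod_cast Int.toNat_of_nonneg (Rat.num_nonneg.mpr hz)
  refine ⟨x.num.toNat * y.den, y.num.toNat * x.den, x.den * y.den, by positivity, ?_, ?_⟩
  · push_cast [hnum hx]
    rw [mul_div_mul_right _ _ (by positivity), Rat.num_div_den]
  · push_cast [hnum hy]
    rw [mul_comm (x.den : ℚ), mul_div_mul_right _ _ (by positivity), Rat.num_div_den]

theorem sub_mul_add_sub_mul_le_of_rat_le {k ℓ p q D : ℕ} (hkl : k ≤ ℓ) (hpq : p ≤ q)
    (hD : 0 < D) (h : (ℓ : ℚ) * (q / D - 1) ≤ k * (p / D - 1)) :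
    (ℓ - k) * p + (q - p) * ℓ ≤ (ℓ - k) * D := by
  have hD' : (D : ℚ) ≠ 0 := by positivity
  have : ℓ * q + k * D ≤ k * p + ℓ * D := by
    rw [div_sub_one hD', div_sub_one hD', mul_div_assoc', mul_div_assoc',
      div_le_div_iff_of_pos_right (by positivity)] at h
    exact_mod_cast (by linarith : (ℓ : ℚ) * q + k * D ≤ k * p + ℓ * D)
  zify [hkl, hpq]
  linarith

theorem stmt7 (k ℓ : ℕ) (hk : 0 < k) (hkl : k < ℓ) (dk dl : ℚ)
    (h0 : 0 ≤ dl) (h1 : dl ≤ dk) (h2 : (ℓ : ℚ) * (dk - 1) ≤ (k : ℚ) * (dl - 1))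
    (ε : ℝ) (hε : 0 < ε) (N : ℕ) :
    ∃ W : List (Fin 2), N ≤ W.length ∧
      |factorDensity (List.replicate k (0 : Fin 2)) W - (dk : ℝ)| < ε ∧
      |factorDensity (List.replicate ℓ (0 : Fin 2)) W - (dl : ℝ)| < ε := by
  obtain ⟨p, q, D, hD, rfl, rfl⟩ := Rat.exists_eq_natCast_div_natCast_of_nonneg h0 (h0.trans h1)
  have hpq : p ≤ q := by
    exact_mod_cast (div_le_div_iff_of_pos_right (by exact_mod_cast hD : (0 : ℚ) < D)).mp h1
  have hslack := sub_mul_add_sub_mul_le_of_rat_le hkl.le hpq hD h2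
  have hL : 0 < (ℓ - k) * D := Nat.mul_pos (Nat.sub_pos_of_lt hkl) hD
  have hcancel : ((ℓ - k : ℕ) : ℝ) ≠ 0 := Nat.cast_ne_zero.mpr (Nat.sub_pos_of_lt hkl).ne'
  set W := fun n => runsWord (0 : Fin 2) 1 (witnessRuns ℓ ((ℓ - k) * p) (q - p) ((ℓ - k) * D) n)
  have hdk : Tendsto (fun n => factorDensity (List.replicate k 0) (W n)) atTop
      (𝓝 (((q / D : ℚ)) : ℝ)) := by
    convert tendsto_factorDensity_runsWord_witnessRuns (a := (0 : Fin 2)) (b := 1) (by decide)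
      hk hkl.le hslack hL using 2
    rw [mul_comm (q - p), ← mul_add, Nat.add_sub_cancel' hpq]
    push_cast
    rw [mul_div_mul_left _ _ hcancel]
  have hdl : Tendsto (fun n => factorDensity (List.replicate ℓ 0) (W n)) atTop
      (𝓝 (((p / D : ℚ)) : ℝ)) := by
    convert tendsto_factorDensity_runsWord_witnessRuns (a := (0 : Fin 2)) (b := 1) (by decide)
      (hk.trans hkl) le_rfl hslack hL using 2
    rw [Nat.sub_self, mul_zero, add_zero]
    push_cast
    rw [mul_div_mul_left _ _ hcancel]
  obtain ⟨n, hn, hnk, hnl⟩ := ((eventually_ge_atTop N).and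
    ((hdk.eventually (Metric.ball_mem_nhds _ hε)).and
      (hdl.eventually (Metric.ball_mem_nhds _ hε)))).exists
  refine ⟨W n, ?_, hnk, hnl⟩
  rw [length_runsWord, sum_witnessRuns_succ (hk.trans hkl) hslack]
  exact hn.trans ((Nat.le_mul_of_pos_right n hL).trans (Nat.le_add_right _ _))
end

section
/- For every integer q ≥ 2, the q-liminf density of the second Zimin word Z₂ = aba equals 1/q; that is, liminf of δ(Z₂, W) over q-ary words W as |W| → ∞ equals 1/q. -/
open Filter

/-!
Lower bound: among the `n²` ordered pairs of positions of a word of length `n` over `q` letters,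
at least `n² / q` carry equal letters (Cauchy–Schwarz over the letter classes). A pair `a + 2 ≤ b`
with `W[a] = W[b]` gives the instance `W[a..b]` of `aba` whose `A` is the single letter `W[a]`;
discarding the `O(n)` pairs with `|a - b| ≤ 1` and halving by symmetry gives
`δ(aba, W) ≥ 1/q - O(1/n)`.

Upper bound: in the block word `0^m 1^m ⋯ (q-1)^m` an instance `ABA` begins and ends in the same
block, because the first letters of the two copies of `A` agree, so do their last letters, and
letters never decrease along the word. Hence it has at most `q · C(m, 2)` instances among its
`C(qm + 1, 2)` factors, and `δ ≤ 1/q`.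
-/

open Finset

theorem card_le_two_mul_card_far_add {n : ℕ} {S : Finset (ℕ × ℕ)} (hS : S ⊆ range n ×ˢ range n)
    (hswap : ∀ p ∈ S, p.swap ∈ S) :
    #S ≤ 2 * #{p ∈ S | p.1 + 2 ≤ p.2} + 3 * n := by
  set F := {p ∈ S | p.1 + 2 ≤ p.2}
  set near : Finset (ℕ × ℕ) := (range n).biUnion fun a => {(a, a - 1), (a, a), (a, a + 1)}
  have hcover : S ⊆ F ∪ F.image Prod.swap ∪ near := by
    rintro ⟨a, b⟩ hab
    have ha : a < n := (mem_product.mp (hS hab)).1 |> mem_range.mp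
    simp only [mem_union, mem_filter, mem_image, mem_biUnion, mem_range, mem_insert,
      mem_singleton, Prod.exists, Prod.swap_prod_mk, Prod.mk.injEq, F, near]
    by_cases hfar : a + 2 ≤ b
    · exact .inl (.inl ⟨hab, hfar⟩)
    by_cases hfar' : b + 2 ≤ a
    · exact .inl (.inr ⟨b, a, ⟨hswap _ hab, hfar'⟩, rfl, rfl⟩)
    exact .inr ⟨a, ha, by omega⟩
  calc #S ≤ #F + #(F.image Prod.swap) + #near :=
        (card_le_card hcover).trans <|
          (card_union_le _ _).trans (Nat.add_le_add_right (card_union_le _ _) _)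
    _ ≤ #F + #F + n * 3 :=
        Nat.add_le_add (Nat.add_le_add_left card_image_le _)
          (by simpa using card_biUnion_le_card_mul (range n) _ 3 fun _ _ => card_le_three)
    _ = 2 * #F + 3 * n := by ring

theorem card_filter_lt_div_eq_le (m q : ℕ) :
    #{p ∈ range (m * q) ×ˢ range (m * q) | p.1 < p.2 ∧ p.1 / m = p.2 / m} ≤ q * m.choose 2 := by
  set block : ℕ → Finset ℕ := fun c => Ico (c * m) (c * m + m)
  have hcover : {p ∈ range (m * q) ×ˢ range (m * q) | p.1 < p.2 ∧ p.1 / m = p.2 / m} ⊆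
      (range q).biUnion fun c => {p ∈ block c ×ˢ block c | p.1 < p.2} := by
    rintro ⟨a, b⟩ hp
    simp only [mem_filter, mem_product, mem_range] at hp
    obtain ⟨⟨ha, hb⟩, hab, hdiv⟩ := hp
    have hm : 0 < m := Nat.pos_of_ne_zero fun h => by simp [h] at ha
    simp only [mem_biUnion, mem_range, mem_filter, mem_product, mem_Ico, block]
    refine ⟨a / m, Nat.div_lt_of_lt_mul ha, ⟨⟨Nat.div_mul_le_self a m, Nat.lt_div_mul_add hm⟩,
      ?_, ?_⟩, hab⟩
    · exact hdiv ▸ Nat.div_mul_le_self b m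
    · exact hdiv ▸ Nat.lt_div_mul_add hm
  calc _ ≤ _ := card_le_card hcover
    _ ≤ #(range q) * m.choose 2 := card_biUnion_le_card_mul _ _ _ fun c _ => by
        rw [card_product_filter_lt, Nat.card_Ico, Nat.add_sub_cancel_left]
    _ = q * m.choose 2 := by rw [card_range]

open Topology in
theorem liminf_eq_of_tendsto_of_frequently_le {ι β : Type*} [ConditionallyCompleteLinearOrder β]
    [TopologicalSpace β] [OrderTopology β] {l : Filter ι} {f g : ι → β} {L : β}
    (hg : Tendsto g l (𝓝 L)) (hgf : ∀ᶠ i in l, g i ≤ f i) (hf : ∃ᶠ i in l, f i ≤ L) :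
    liminf f l = L := by
  have : l.NeBot := ⟨fun hbot => frequently_bot (hbot ▸ hf)⟩
  refine le_antisymm (liminf_le_of_frequently_le hf (hg.isBoundedUnder_ge.mono_ge hgf)) ?_
  calc L = liminf g l := hg.liminf_eq.symm
    _ ≤ liminf f l := liminf_le_liminf hgf hg.isBoundedUnder_ge
        (IsCoboundedUnder.of_frequently_le hf)

section Words

variable {α : Type*}

theorem isInstance_zimin_two_iff {U : List α} :
    IsInstance (Zimin 2) U ↔ ∃ A B : List α, A ≠ [] ∧ B ≠ [] ∧ U = A ++ B ++ A := by
  constructor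
  · rintro ⟨φ, hφ, rfl⟩
    exact ⟨φ 0, φ 1, hφ 0 (by simp [Zimin]), hφ 1 (by simp [Zimin]), by simp [Zimin]⟩
  · rintro ⟨A, B, hA, hB, rfl⟩
    refine ⟨fun x => if x = 1 then B else A, ?_, by simp [Zimin]⟩
    simp [Zimin, hA, hB]

theorem getElem?_take_drop_of_lt (W : List α) {i j o : ℕ} (ho : o < j - i) :
    ((W.drop i).take (j - i))[o]? = W[i + o]? := by
  rw [List.getElem?_take_of_lt ho, List.getElem?_drop]

theorem isInstance_zimin_two_factor_of_getElem?_eq (W : List α) {a b : ℕ} (hab : a + 2 ≤ b)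
    (hb : b < W.length) (h : W[a]? = W[b]?) :
    IsInstance (Zimin 2) ((W.drop a).take (b + 1 - a)) := by
  rw [isInstance_zimin_two_iff]
  refine ⟨[W[a]], (W.drop (a + 1)).take (b - a - 1), by simp, ?_, ?_⟩
  · simp only [ne_eq, List.take_eq_nil_iff, List.drop_eq_nil_iff]; omega
  · obtain ⟨c, rfl⟩ : ∃ c, b = a + 2 + c := ⟨b - (a + 2), by omega⟩
    rw [List.getElem?_eq_getElem (by omega), List.getElem?_eq_getElem hb, Option.some_inj] at h
    rw [List.drop_eq_getElem_cons (by omega), show a + 2 + c + 1 - a = (c + 2) + 1 by omega,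
      List.take_succ_cons, show a + 2 + c - a - 1 = c + 1 by omega, List.take_add_one,
      List.getElem?_drop, show a + 1 + (c + 1) = a + 2 + c by omega, List.getElem?_eq_getElem hb,
      ← h]
    simp

theorem exists_border_of_isInstance_zimin_two_factor (W : List α) {i j : ℕ} (hj : j ≤ W.length)
    (h : IsInstance (Zimin 2) ((W.drop i).take (j - i))) :
    ∃ k, 0 < k ∧ i + 2 * k < j ∧ ∀ o < k, W[i + o]? = W[j - k + o]? := by
  obtain ⟨A, B, hA, hB, hU⟩ := isInstance_zimin_two_iff.mp h
  have hlen := congrArg List.length hU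
  simp only [List.length_take, List.length_drop, List.length_append] at hlen
  have hA0 := List.length_pos_iff.mpr hA
  have hB0 := List.length_pos_iff.mpr hB
  refine ⟨A.length, hA0, by omega, fun o ho => ?_⟩
  have hfirst : W[i + o]? = A[o]? := by
    rw [← getElem?_take_drop_of_lt W (j := j) (by omega), hU, List.append_assoc,
      List.getElem?_append_left ho]
  have hlast : W[j - A.length + o]? = A[o]? := by
    rw [show j - A.length + o = i + (A.length + B.length + o) by omega,
      ← getElem?_take_drop_of_lt W (j := j) (by omega), hU,
      List.getElem?_append_right (by simp), List.length_append, Nat.add_sub_cancel_left]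
  rw [hfirst, hlast]

def equalLetterPairs [DecidableEq α] (W : List α) : Finset (ℕ × ℕ) :=
  {p ∈ range W.length ×ˢ range W.length | W[p.1]? = W[p.2]?}

theorem sq_length_le_card_mul_card_equalLetterPairs [DecidableEq α] [Fintype α] (W : List α) :
    W.length ^ 2 ≤ Fintype.card α * #(equalLetterPairs W) := by
  set n := W.length
  set fiber : α → Finset ℕ := fun c => {a ∈ range n | W[a]? = some c}
  set letters : Finset (Option α) := univ.map ⟨some, Option.some_injective α⟩
  have hmaps : Set.MapsTo (fun a : ℕ => W[a]?) ↑(range n) ↑letters := fun a ha =>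
    have ha : a < n := mem_range.mp ha
    mem_coe.mpr <| mem_map.mpr ⟨W[a], mem_univ _, (List.getElem?_eq_getElem ha).symm⟩
  have hsum : ∑ c, #(fiber c) = n := by
    rw [← card_range n, card_eq_sum_card_fiberwise hmaps, sum_map]
    rfl
  have hsq : #(equalLetterPairs W) = ∑ c, #(fiber c) ^ 2 := by
    rw [equalLetterPairs, card_eq_sum_card_fiberwise (f := fun p => W[p.1]?) (t := letters)
      fun p hp => hmaps (mem_product.mp (mem_filter.mp hp).1).1, sum_map]
    refine sum_congr rfl fun c _ => ?_
    rw [sq, ← card_product]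
    congr 1
    ext ⟨a, b⟩
    simp only [fiber, mem_filter, mem_product, Function.Embedding.coeFn_mk]
    constructor
    · rintro ⟨⟨hab, he⟩, hc⟩
      exact ⟨⟨hab.1, hc⟩, hab.2, he ▸ hc⟩
    · rintro ⟨⟨ha, hc⟩, hb, hc'⟩
      exact ⟨⟨⟨ha, hb⟩, hc.trans hc'.symm⟩, hc⟩
  calc n ^ 2 = (∑ c, #(fiber c)) ^ 2 := by rw [hsum]
    _ ≤ Fintype.card α * ∑ c, #(fiber c) ^ 2 := sq_sum_le_card_mul_sum_sq
    _ = Fintype.card α * #(equalLetterPairs W) := by rw [hsq]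

open Classical in
noncomputable def instanceFactors {Γ : Type*} (V : List Γ) (W : List α) : Finset (ℕ × ℕ) :=
  {p ∈ range (W.length + 1) ×ˢ range (W.length + 1) |
    p.1 < p.2 ∧ p.2 ≤ W.length ∧ IsInstance V ((W.drop p.1).take (p.2 - p.1))}

theorem instSubCount_eq_card_instanceFactors {Γ : Type*} (V : List Γ) (W : List α) :
    instSubCount V W = #(instanceFactors V W) :=
  Nat.subtype_card _ fun p => by
    simp only [instanceFactors, mem_filter, mem_product, mem_range]
    exact ⟨fun h => h.2, fun h => ⟨⟨by omega, by omega⟩, h⟩⟩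

theorem card_far_equalLetterPairs_le_instSubCount [DecidableEq α] (W : List α) :
    #{p ∈ equalLetterPairs W | p.1 + 2 ≤ p.2} ≤ instSubCount (Zimin 2) W := by
  rw [instSubCount_eq_card_instanceFactors]
  refine card_le_card_of_injOn (fun p => (p.1, p.2 + 1)) (fun p hp => ?_) ?_
  · simp only [equalLetterPairs, coe_filter, mem_filter, mem_product, mem_range,
      Set.mem_ofPred_eq] at hp
    obtain ⟨⟨⟨ha, hb⟩, he⟩, hfar⟩ := hp
    simp only [instanceFactors, coe_filter, mem_product, mem_range, Set.mem_ofPred_eq]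
    exact ⟨by omega, by omega, by omega,
      isInstance_zimin_two_factor_of_getElem?_eq W hfar hb he⟩
  · intro p _ p' _ h
    simp only [Prod.mk.injEq, Nat.add_right_cancel_iff] at h
    exact Prod.ext h.1 h.2

theorem sq_length_le_card_mul_instSubCount [DecidableEq α] [Fintype α] (W : List α) :
    W.length ^ 2 ≤ Fintype.card α * (2 * instSubCount (Zimin 2) W + 3 * W.length) := by
  have hsymm : ∀ p ∈ equalLetterPairs W, p.swap ∈ equalLetterPairs W := by
    intro p hp
    simp only [equalLetterPairs, mem_filter, mem_product] at hp ⊢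
    exact ⟨⟨hp.1.2, hp.1.1⟩, hp.2.symm⟩
  calc W.length ^ 2 ≤ Fintype.card α * #(equalLetterPairs W) :=
        sq_length_le_card_mul_card_equalLetterPairs W
    _ ≤ Fintype.card α * (2 * instSubCount (Zimin 2) W + 3 * W.length) := by
        gcongr
        exact (card_le_two_mul_card_far_add (filter_subset _ _) hsymm).trans <|
          Nat.add_le_add_right
            (Nat.mul_le_mul_left 2 (card_far_equalLetterPairs_le_instSubCount W)) _

theorem inv_card_sub_le_instDensity [Fintype α] (W : List α) :
    1 / (Fintype.card α : ℝ) - 4 / (W.length + 1) ≤ instDensity (Zimin 2) W := by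
  classical
  set n := W.length
  set q := Fintype.card α
  rcases Nat.eq_zero_or_pos n with hn | hn
  · have hchoose : (W.length + 1).choose 2 = 0 := by simp [show W.length = 0 from hn]
    rw [instDensity, hchoose, hn]
    norm_num
    linarith [Nat.cast_inv_le_one (α := ℝ) q]
  have hq : (1 : ℝ) ≤ q := Nat.one_le_cast.mpr (Fintype.card_pos_iff.mpr ⟨W[0]⟩)
  have hcount : (n : ℝ) ^ 2 ≤ q * (2 * instSubCount (Zimin 2) W + 3 * n) := by
    exact_mod_cast sq_length_le_card_mul_instSubCount W
  rw [instDensity, Nat.cast_choose_two, Nat.cast_add_one, add_sub_cancel_right,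
    le_div_iff₀ (by positivity)]
  calc (1 / (q : ℝ) - 4 / (n + 1)) * ((n + 1) * n / 2) = (n + 1) * n / (2 * q) - 2 * n := by
        field_simp
        ring
    _ ≤ instSubCount (Zimin 2) W := by
        rw [sub_le_iff_le_add, div_le_iff₀ (by positivity)]
        nlinarith

end Words

def blockWord (q m : ℕ) : List (Fin q) :=
  List.ofFn fun x : Fin (m * q) => ⟨x / m, Nat.div_lt_of_lt_mul x.2⟩

theorem length_blockWord (q m : ℕ) : (blockWord q m).length = m * q :=
  List.length_ofFn

theorem blockWord_getElem?_eq_iff {q m x y : ℕ} (hx : x < m * q) (hy : y < m * q) :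
    (blockWord q m)[x]? = (blockWord q m)[y]? ↔ x / m = y / m := by
  simp [blockWord, hx, hy, Fin.ext_iff]

theorem div_eq_div_of_mem_instanceFactors_blockWord {q m : ℕ} {p : ℕ × ℕ}
    (hp : p ∈ instanceFactors (Zimin 2) (blockWord q m)) :
    p.1 + 2 < p.2 ∧ p.2 ≤ m * q ∧ p.1 / m = (p.2 - 1) / m := by
  obtain ⟨i, j⟩ := p
  simp only [instanceFactors, mem_filter, mem_product, mem_range, length_blockWord] at hp
  obtain ⟨-, hij, hj, hinst⟩ := hp
  obtain ⟨k, hk, hkj, hborder⟩ := exists_border_of_isInstance_zimin_two_factor _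
    ((length_blockWord q m).symm ▸ hj) hinst
  have hfirst : i / m = (j - k) / m := by
    simpa using (blockWord_getElem?_eq_iff (by omega) (by omega)).mp (hborder 0 hk)
  have hlast : (i + (k - 1)) / m = (j - 1) / m := by
    simpa [show j - k + (k - 1) = j - 1 by omega] using
      (blockWord_getElem?_eq_iff (by omega) (by omega)).mp (hborder (k - 1) (by omega))
  refine ⟨by omega, hj, le_antisymm ?_ ?_⟩
  · exact hlast ▸ Nat.div_le_div_right (by omega)
  · calc (j - 1) / m = (i + (k - 1)) / m := hlast.symm
      _ ≤ (j - k) / m := Nat.div_le_div_right (by omega)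
      _ = i / m := hfirst.symm

theorem instSubCount_blockWord_le (q m : ℕ) :
    instSubCount (Zimin 2) (blockWord q m) ≤ q * m.choose 2 := by
  rw [instSubCount_eq_card_instanceFactors]
  refine (card_le_card_of_injOn (fun p => (p.1, p.2 - 1)) (fun p hp => ?_) ?_).trans
    (card_filter_lt_div_eq_le m q)
  · obtain ⟨hij, hj, hdiv⟩ := div_eq_div_of_mem_instanceFactors_blockWord hp
    simp only [coe_filter, mem_product, mem_range, Set.mem_ofPred_eq]
    exact ⟨⟨by omega, by omega⟩, by omega, hdiv⟩
  · intro p hp p' hp' h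
    have := (div_eq_div_of_mem_instanceFactors_blockWord hp).1
    have := (div_eq_div_of_mem_instanceFactors_blockWord hp').1
    simp only [Prod.mk.injEq] at h
    exact Prod.ext h.1 (by omega)

theorem instDensity_blockWord_le (q m : ℕ) :
    instDensity (Zimin 2) (blockWord q m) ≤ 1 / (q : ℝ) := by
  have hcount : (instSubCount (Zimin 2) (blockWord q m) : ℝ) ≤ q * (m * (m - 1) / 2) := by
    rw [← Nat.cast_choose_two]
    exact_mod_cast instSubCount_blockWord_le q m
  rw [instDensity, length_blockWord, Nat.cast_choose_two, Nat.cast_add_one, add_sub_cancel_right]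
  push_cast
  rcases Nat.eq_zero_or_pos q with hq | hq
  · subst hq
    simp only [Nat.cast_zero, zero_mul] at hcount
    simp [le_antisymm hcount (Nat.cast_nonneg _)]
  refine div_le_of_le_mul₀ (by positivity) (by positivity) ?_
  have hm : (0 : ℝ) ≤ m := Nat.cast_nonneg m
  calc (instSubCount (Zimin 2) (blockWord q m) : ℝ) ≤ q * (m * (m - 1) / 2) := hcount
    _ ≤ (m * q + 1) * m / 2 := by nlinarith
    _ = 1 / q * ((m * q + 1) * (m * q) / 2) := by field_simp

open Topology in
theorem stmt8 (q : ℕ) (hq : 2 ≤ q) : liminfDensity (Zimin 2) q = 1 / (q : ℝ) := by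
  have hlower : Tendsto (fun n : ℕ => 1 / (q : ℝ) - 4 / (n + 1)) atTop (𝓝 (1 / q)) := by
    simpa [div_eq_mul_inv] using
      tendsto_const_nhds.sub (tendsto_one_div_add_atTop_nhds_zero_nat.const_mul (4 : ℝ))
  refine liminf_eq_of_tendsto_of_frequently_le (hlower.comp tendsto_comap)
    (Eventually.of_forall fun W => by simpa using inv_card_sub_le_instDensity W) ?_
  rw [frequently_comap, frequently_atTop]
  exact fun N => ⟨(N + 1) * q, by nlinarith, blockWord q (N + 1), length_blockWord q (N + 1),
    instDensity_blockWord_le q (N + 1)⟩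
end

section
/- Let V be a word with k distinct letters, each occurring at least r ≥ 2 times in V, let q ≥ 2 be an integer, and let W_n be a uniformly random q-ary word of length n. Then for every nondecreasing function f : ℕ → (0,∞) there exists N such that for all n ≥ N: P( binom(n+1,2)·δ(V,W_n) > n·f(n) ) < n^{k+3} · q^{f(n)(1−r)/r}. -/
open Filter

/-!
If more than `n f(n)` factors of `W` are instances of `V`, one of them is longer than `f(n)`,
because at most `n ⌊f(n)⌋` factors are that short. An instance of `V` of length `m` is determined
by the lengths of the images of the `k` letters of `V` together with the concatenation of these
images, and this concatenation has length at most `m / r` since every image occurs at least `r`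
times in the instance. Hence a fixed window of length `m ≥ f(n)` is a `V`-instance with probability
at most `(n + 1)^k q^(m/r - m) ≤ (n + 1)^k q^(f(n)(1 - r)/r)`, and a union bound over the at most
`(n + 1)^2` windows gives `(n + 1)^(k + 2) q^(f(n)(1 - r)/r)`, which is below the claimed bound
once `n > 2^(k + 2)`.
-/

theorem List.eq_of_flatten_eq_of_map_length_eq {β : Type*} :
    ∀ {L₁ L₂ : List (List β)},
      L₁.map length = L₂.map length → L₁.flatten = L₂.flatten → L₁ = L₂
  | [], [], _, _ => rfl
  | [], _ :: _, hlen, _ | _ :: _, [], hlen, _ => by simp at hlen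
  | a :: L₁, b :: L₂, hlen, hfl => by
    simp only [map_cons, cons.injEq] at hlen
    obtain ⟨rfl, hL⟩ := append_inj hfl hlen.1
    rw [eq_of_flatten_eq_of_map_length_eq hlen.2 hL]

theorem Nat.card_subtype_le_sum {α ι : Type*} [Finite α] (s : Finset ι) {P : α → Prop}
    {Q : ι → α → Prop} (h : ∀ a, P a → ∃ i ∈ s, Q i a) :
    Nat.card {a // P a} ≤ ∑ i ∈ s, Nat.card {a // Q i a} := by
  change Nat.card {a | P a} ≤ ∑ i ∈ s, Nat.card {a | Q i a}
  simp only [Nat.card_coe_set_eq]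
  calc {a | P a}.ncard ≤ (⋃ i ∈ s, {a | Q i a}).ncard :=
        Set.ncard_le_ncard fun a ha => by simpa using h a ha
    _ ≤ _ := s.set_ncard_biUnion_le _

theorem List.take_drop_ofFn {α : Type*} {n : ℕ} (W : Fin n → α) {i m : ℕ} (him : i + m ≤ n) :
    ((List.ofFn W).drop i).take m = List.ofFn fun t : Fin m => W ⟨i + t, by omega⟩ := by
  apply List.ext_getElem
  · simp only [List.length_take, List.length_drop, List.length_ofFn]; omega
  · intro j _ _
    simp

theorem card_window_le {α : Type*} [Fintype α] (P : List α → Prop) {n i m : ℕ}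
    (him : i + m ≤ n) :
    Nat.card {W : Fin n → α // P (((List.ofFn W).drop i).take m)} ≤
      Nat.card {U : Fin m → α // P (List.ofFn U)} * Fintype.card α ^ (n - m) := by
  let window (t : Fin m) : Fin n := ⟨i + t, by omega⟩
  let outside (t : Fin (n - m)) : Fin n :=
    ⟨if (t : ℕ) < i then t else t + m, by split_ifs <;> omega⟩
  have hcover : ∀ p, (∃ t, p = window t) ∨ ∃ t, p = outside t := by
    intro p
    by_cases hp : i ≤ p ∧ p < i + m
    · exact .inl ⟨⟨p - i, by omega⟩, Fin.ext (by simp only [window]; omega)⟩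
    · by_cases hpi : (p : ℕ) < i
      · exact .inr ⟨⟨p, by omega⟩, Fin.ext (by simp [outside, hpi])⟩
      · exact .inr ⟨⟨p - m, by omega⟩, Fin.ext (by simp only [outside]; split_ifs <;> omega)⟩
  let split (W : {W : Fin n → α // P (((List.ofFn W).drop i).take m)}) :
      {U : Fin m → α // P (List.ofFn U)} × (Fin (n - m) → α) :=
    (⟨fun t => W.1 (window t), by simpa [window, List.take_drop_ofFn W.1 him] using W.2⟩,
      fun t => W.1 (outside t))
  have hsplit : Function.Injective split := by
    intro W₁ W₂ h
    simp only [split, Prod.mk.injEq, Subtype.mk.injEq, funext_iff] at h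
    refine Subtype.ext (funext fun p => ?_)
    rcases hcover p with ⟨t, rfl⟩ | ⟨t, rfl⟩
    exacts [h.1 t, h.2 t]
  calc _ ≤ Nat.card ({U : Fin m → α // P (List.ofFn U)} × (Fin (n - m) → α)) :=
        Nat.card_le_card_of_injective split hsplit
    _ = _ := by simp [Nat.card_eq_fintype_card]

theorem exists_lt_sub_of_card_gt {n : ℕ} (P : ℕ × ℕ → Prop) {c : ℝ} (hc : 0 ≤ c)
    (h : n * c < Nat.card {p : ℕ × ℕ // p.1 < p.2 ∧ p.2 ≤ n ∧ P p}) :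
    ∃ p : ℕ × ℕ, p.1 < p.2 ∧ p.2 ≤ n ∧ c < ((p.2 - p.1 : ℕ) : ℝ) ∧ P p := by
  by_contra! hshort
  have hlen : ∀ p : {p : ℕ × ℕ // p.1 < p.2 ∧ p.2 ≤ n ∧ P p}, p.1.2 - p.1.1 ≤ ⌊c⌋₊ :=
    fun p => Nat.le_floor (not_lt.1 fun hlong => hshort p.1 p.2.1 p.2.2.1 hlong p.2.2.2)
  let encode (p : {p : ℕ × ℕ // p.1 < p.2 ∧ p.2 ≤ n ∧ P p}) : Fin n × Fin ⌊c⌋₊ :=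
    (⟨p.1.1, by have := p.2; omega⟩, ⟨p.1.2 - p.1.1 - 1, by have := p.2; have := hlen p; omega⟩)
  have hencode : Function.Injective encode := by
    intro p₁ p₂ hp
    simp only [encode, Prod.mk.injEq, Fin.mk.injEq] at hp
    have := p₁.2; have := p₂.2
    exact Subtype.ext (Prod.ext hp.1 (by omega))
  have hcard : Nat.card {p : ℕ × ℕ // p.1 < p.2 ∧ p.2 ≤ n ∧ P p} ≤ n * ⌊c⌋₊ := by
    simpa using Nat.card_le_card_of_injective encode hencode
  have : (n * ⌊c⌋₊ : ℝ) ≤ n * c := by gcongr; exact Nat.floor_le hc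
  exact absurd h (not_lt.2 (le_trans (by exact_mod_cast hcard) this))

theorem rpow_div_pow_le {q r m : ℕ} (hq : 1 ≤ q) (hr : 1 ≤ r) {c : ℝ} (hcm : c ≤ m) :
    (q : ℝ) ^ (m / r) / (q : ℝ) ^ m ≤ (q : ℝ) ^ (c * (1 - r) / r) := by
  have hq' : (1 : ℝ) ≤ q := by exact_mod_cast hq
  have hr' : (1 : ℝ) ≤ r := by exact_mod_cast hr
  rw [← Real.rpow_natCast, ← Real.rpow_natCast, ← Real.rpow_sub (by positivity)]
  apply Real.rpow_le_rpow_of_exponent_le hq'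
  calc ((m / r : ℕ) : ℝ) - m ≤ m / r - m := by gcongr; exact Nat.cast_div_le
    _ = m * (1 - r) / r := by field_simp
    _ ≤ c * (1 - r) / r :=
      div_le_div_of_nonneg_right (mul_le_mul_of_nonpos_right hcm (by linarith)) (by linarith)

theorem add_one_pow_lt_pow_succ {n k : ℕ} (hn : 2 ^ k < n) : (n + 1) ^ k < n ^ (k + 1) := by
  have hn1 : 1 ≤ n := Nat.one_le_two_pow.trans hn.le
  calc (n + 1) ^ k ≤ (2 * n) ^ k := Nat.pow_le_pow_left (by omega) k
    _ = 2 ^ k * n ^ k := Nat.mul_pow 2 n k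
    _ < n * n ^ k := Nat.mul_lt_mul_of_pos_right hn (by positivity)
    _ = n ^ (k + 1) := by ring

noncomputable def longWindows (n : ℕ) (c : ℝ) : Finset (ℕ × ℕ) :=
  ((Finset.range (n + 1)) ×ˢ (Finset.range (n + 1))).filter
    fun p => p.1 < p.2 ∧ c < ((p.2 - p.1 : ℕ) : ℝ)

theorem card_longWindows_le (n : ℕ) (c : ℝ) : (longWindows n c).card ≤ (n + 1) ^ 2 :=
  (Finset.card_filter_le _ _).trans (by simp [sq])

theorem exists_mem_longWindows_of_mul_lt_instSubCount {Γ β : Type*} (V : List Γ) (W : List β)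
    {c : ℝ} (hc : 0 ≤ c) (h : W.length * c < instSubCount V W) :
    ∃ p ∈ longWindows W.length c, IsInstance V ((W.drop p.1).take (p.2 - p.1)) := by
  obtain ⟨p, hp₁, hp₂, hpc, hp⟩ := exists_lt_sub_of_card_gt _ hc h
  refine ⟨p, ?_, hp⟩
  simp only [longWindows, Finset.mem_filter, Finset.mem_product, Finset.mem_range]
  exact ⟨⟨by omega, by omega⟩, hp₁, hpc⟩

section Instances

variable {Γ α : Type*} [DecidableEq Γ] (V : List Γ)

theorem length_flatten_map (φ : Γ → List α) :
    ((V.map φ).flatten).length = ∑ x ∈ V.toFinset, V.count x * (φ x).length := by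
  rw [List.length_flatten, List.map_map, Finset.sum_list_map_count]
  rfl

theorem length_flatten_map_dedup (φ : Γ → List α) :
    ((V.dedup.map φ).flatten).length = ∑ x ∈ V.toFinset, (φ x).length := by
  have hset : V.dedup.toFinset = V.toFinset := by ext; simp
  rw [List.length_flatten, List.map_map, ← List.sum_toFinset _ (List.nodup_dedup V), hset]
  rfl

variable {V}

theorem mul_length_flatten_map_dedup_le {r : ℕ} (hmult : ∀ x ∈ V, r ≤ V.count x)
    (φ : Γ → List α) :
    r * ((V.dedup.map φ).flatten).length ≤ ((V.map φ).flatten).length := by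
  rw [length_flatten_map V φ, length_flatten_map_dedup, Finset.mul_sum]
  exact Finset.sum_le_sum fun x hx =>
    Nat.mul_le_mul_right _ (hmult x (List.mem_toFinset.1 hx))

theorem flatten_map_eq_of_flatten_map_dedup_eq {φ ψ : Γ → List α}
    (hlen : ∀ x ∈ V, (φ x).length = (ψ x).length)
    (h : (V.dedup.map φ).flatten = (V.dedup.map ψ).flatten) :
    (V.map φ).flatten = (V.map ψ).flatten := by
  have hmap : V.dedup.map φ = V.dedup.map ψ := by
    refine List.eq_of_flatten_eq_of_map_length_eq ?_ h
    simp only [List.map_map]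
    exact List.map_inj_left.2 fun x hx => hlen x (List.mem_dedup.1 hx)
  rw [List.map_inj_left.2 fun x hx => List.map_inj_left.1 hmap x (List.mem_dedup.2 hx)]

theorem card_isInstance_le [Fintype α] [Nonempty α] {r : ℕ} (hr : 0 < r)
    (hmult : ∀ x ∈ V, r ≤ V.count x) (m : ℕ) :
    Nat.card {U : Fin m → α // IsInstance V (List.ofFn U)} ≤
      (m + 1) ^ V.dedup.length * Fintype.card α ^ (m / r) := by
  choose φ hφ using fun U : {U : Fin m → α // IsInstance V (List.ofFn U)} => U.2
  let images U := (V.dedup.map (φ U)).flatten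
  have himages : ∀ U, (images U).length ≤ m / r := fun U => by
    rw [Nat.le_div_iff_mul_le hr, mul_comm]
    have h := mul_length_flatten_map_dedup_le hmult (φ U)
    rwa [← (hφ U).2, List.length_ofFn] at h
  have hlength : ∀ U, ∀ x ∈ V.dedup, (φ U x).length ≤ m := fun U x hx =>
    calc (φ U x).length ≤ (images U).length :=
          (List.sublist_flatten_of_mem (List.mem_map_of_mem hx)).length_le
      _ ≤ m := (himages U).trans (Nat.div_le_self m r)
  let encode U : (Fin V.dedup.length → Fin (m + 1)) × (Fin (m / r) → α) :=
    (fun i => ⟨(φ U V.dedup[i]).length, Nat.lt_succ_of_le (hlength U _ (List.getElem_mem _))⟩,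
      fun j => (images U).getD j (Classical.arbitrary α))
  have hencode : Function.Injective encode := by
    intro U₁ U₂ h
    simp only [encode, Prod.mk.injEq, funext_iff, Fin.ext_iff] at h
    have hlen : ∀ x ∈ V, (φ U₁ x).length = (φ U₂ x).length := fun x hx => by
      obtain ⟨i, hi, rfl⟩ := List.mem_iff_getElem.1 (List.mem_dedup.2 hx)
      exact h.1 ⟨i, hi⟩
    have himages_eq : images U₁ = images U₂ := by
      have hl : (images U₁).length = (images U₂).length := by
        simp only [images, length_flatten_map_dedup]
        exact Finset.sum_congr rfl fun x hx => hlen x (List.mem_toFinset.1 hx)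
      refine List.ext_getElem hl fun j hj₁ hj₂ => ?_
      have hj := h.2 ⟨j, hj₁.trans_le (himages U₁)⟩
      rwa [List.getD_eq_getElem _ _ hj₁, List.getD_eq_getElem _ _ hj₂] at hj
    apply Subtype.ext (List.ofFn_injective _)
    rw [(hφ U₁).2, (hφ U₂).2]
    exact flatten_map_eq_of_flatten_map_dedup_eq hlen himages_eq
  calc _ ≤ Nat.card ((Fin V.dedup.length → Fin (m + 1)) × (Fin (m / r) → α)) :=
        Nat.card_le_card_of_injective encode hencode
    _ = _ := by simp [Nat.card_eq_fintype_card]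

theorem card_window_isInstance_div_le [Fintype α] [Nonempty α] {r : ℕ} (hr : 1 ≤ r)
    (hmult : ∀ x ∈ V, r ≤ V.count x) {n i m : ℕ} (him : i + m ≤ n) {c : ℝ} (hcm : c ≤ m) :
    (Nat.card {W : Fin n → α // IsInstance V (((List.ofFn W).drop i).take m)} : ℝ) /
        (Fintype.card α : ℝ) ^ n ≤
      ((n : ℝ) + 1) ^ V.dedup.length * (Fintype.card α : ℝ) ^ (c * (1 - r) / r) := by
  set q := Fintype.card α
  have hq : 1 ≤ q := Fintype.card_pos
  have hcard : (Nat.card {W : Fin n → α // IsInstance V (((List.ofFn W).drop i).take m)} : ℝ) ≤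
      ((m : ℝ) + 1) ^ V.dedup.length * (q : ℝ) ^ (m / r) * (q : ℝ) ^ (n - m) := by
    exact_mod_cast (card_window_le (α := α) _ him).trans
      (Nat.mul_le_mul_right _ (card_isInstance_le (α := α) hr hmult m))
  have hn : n = m + (n - m) := by omega
  calc _ ≤ ((m : ℝ) + 1) ^ V.dedup.length * (q : ℝ) ^ (m / r) * (q : ℝ) ^ (n - m) /
        (q : ℝ) ^ n := by gcongr
    _ = ((m : ℝ) + 1) ^ V.dedup.length * ((q : ℝ) ^ (m / r) / (q : ℝ) ^ m) := by
        rw [hn, pow_add, Nat.add_sub_cancel_left]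
        field_simp
    _ ≤ _ := by
        gcongr
        · exact_mod_cast (by omega : m ≤ n)
        · exact rpow_div_pow_le hq hr hcm

end Instances

theorem stmt16_general {Γ : Type*} [DecidableEq Γ] (V : List Γ)
    (k r : ℕ) (hr : 2 ≤ r) (hcard : V.dedup.length = k)
    (hmult : ∀ x ∈ V, r ≤ V.count x)
    (q : ℕ) (hq : 2 ≤ q)
    (f : ℕ → ℝ) (hfpos : ∀ n, 0 < f n) :
    ∃ N : ℕ, ∀ n : ℕ, N ≤ n →
      (Nat.card {W : Fin n → Fin q //
          (n : ℝ) * f n < (instSubCount V (List.ofFn W) : ℝ)} : ℝ) / (q : ℝ) ^ n <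
        (n : ℝ) ^ (k + 3) * (q : ℝ) ^ (f n * (1 - (r : ℝ)) / r) := by
  refine ⟨2 ^ (k + 2) + 1, fun n hn => ?_⟩
  have : Nonempty (Fin q) := ⟨⟨0, by omega⟩⟩
  set ρ := (q : ℝ) ^ (f n * (1 - r) / r)
  have hcover : ∀ W : Fin n → Fin q, (n : ℝ) * f n < instSubCount V (List.ofFn W) →
      ∃ p ∈ longWindows n (f n), IsInstance V (((List.ofFn W).drop p.1).take (p.2 - p.1)) :=
    fun W hW => by
      simpa using exists_mem_longWindows_of_mul_lt_instSubCount V (List.ofFn W) (hfpos n).le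
        (by simpa using hW)
  calc _ ≤ ∑ p ∈ longWindows n (f n), (Nat.card {W : Fin n → Fin q //
        IsInstance V (((List.ofFn W).drop p.1).take (p.2 - p.1))} : ℝ) / (q : ℝ) ^ n := by
        rw [← Finset.sum_div]
        gcongr
        exact_mod_cast Nat.card_subtype_le_sum _ hcover
    _ ≤ ∑ p ∈ longWindows n (f n), ((n : ℝ) + 1) ^ k * ρ := by
        refine Finset.sum_le_sum fun p hp => ?_
        simp only [longWindows, Finset.mem_filter, Finset.mem_product, Finset.mem_range] at hp
        simpa [hcard] using card_window_isInstance_div_le (α := Fin q) (by omega) hmult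
          (by omega : p.1 + (p.2 - p.1) ≤ n) hp.2.2.le
    _ ≤ ((n : ℝ) + 1) ^ 2 * (((n : ℝ) + 1) ^ k * ρ) := by
        rw [Finset.sum_const, nsmul_eq_mul]
        gcongr
        exact_mod_cast card_longWindows_le n (f n)
    _ < (n : ℝ) ^ (k + 3) * ρ := by
        rw [← mul_assoc, ← pow_add, add_comm 2]
        gcongr
        exact_mod_cast add_one_pow_lt_pow_succ (by omega)

theorem stmt16 {Γ : Type*} [DecidableEq Γ] (V : List Γ) (hV : V ≠ [])
    (k r : ℕ) (hr : 2 ≤ r) (hcard : V.dedup.length = k)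
    (hmult : ∀ x ∈ V, r ≤ V.count x)
    (q : ℕ) (hq : 2 ≤ q)
    (f : ℕ → ℝ) (hfpos : ∀ n, 0 < f n) (hfmono : Monotone f) :
    ∃ N : ℕ, ∀ n : ℕ, N ≤ n →
      (Nat.card {W : Fin n → Fin q //
          (n : ℝ) * f n < (instSubCount V (List.ofFn W) : ℝ)} : ℝ) / (q : ℝ) ^ n <
        (n : ℝ) ^ (k + 3) * (q : ℝ) ^ (f n * (1 - (r : ℝ)) / r) :=
  stmt16_general V k r hr hcard hmult q hq f hfpos
end
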